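/- arXiv:math/9910062 — 2 statements merged into one kernel-verified Lean document; each statement's English description precedes it below -/
import Mathlib

section
/- Let P_1, P_2 be probability mass functions on a finite set A with full support. There exists a sequence of sets C_n ⊆ A^n such that P_1^n(C_n^c) → 0 and (1/n) log P_2^n(C_n) → -H(P_1‖P_2) as n → ∞. -/
/-!
Under `P₁ⁿ` the log-likelihood ratio `∑ i, log (P₁ (x i) / P₂ (x i))` is a sum of `n` i.i.d.
terms with mean `H = H(P₁‖P₂)`, so by Chebyshev it lies within `t` of `n * H` with
`P₁ⁿ`-probability at least `1 - n Var / t ^ 2`. On that typical set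
`P₂ⁿ(x) = P₁ⁿ(x) * exp (-∑ i, log (P₁ (x i) / P₂ (x i)))` lies between
`exp (-n H ∓ t) * P₁ⁿ(x)`, hence `P₂ⁿ(Cₙ) = exp (-n H ± t) * (1 - o(1))`. Any slack with
`√n ≪ t ≪ n`, e.g. `t = n ^ (3/4)`, makes both errors vanish.
-/

open Finset Filter Topology

theorem sum_filter_lt_abs_le_sum_mul_sq_div {ι : Type*} (s : Finset ι) (w f : ι → ℝ)
    (hw : ∀ i ∈ s, 0 ≤ w i) {t : ℝ} (ht : 0 < t) :
    ∑ i ∈ s with t < |f i|, w i ≤ (∑ i ∈ s, w i * f i ^ 2) / t ^ 2 := by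
  rw [le_div_iff₀ (by positivity), sum_mul]
  calc ∑ i ∈ s with t < |f i|, w i * t ^ 2
      ≤ ∑ i ∈ s with t < |f i|, w i * f i ^ 2 := by
        refine sum_le_sum fun i hi => ?_
        obtain ⟨his, hti⟩ := mem_filter.mp hi
        have : t ^ 2 ≤ f i ^ 2 := by
          rw [← sq_abs (f i)]
          exact pow_le_pow_left₀ ht.le hti.le 2
        exact mul_le_mul_of_nonneg_left this (hw i his)
    _ ≤ ∑ i ∈ s, w i * f i ^ 2 :=
        sum_le_sum_of_subset_of_nonneg (filter_subset _ _) fun i hi _ =>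
          mul_nonneg (hw i hi) (sq_nonneg _)

section ProductWeights

variable {A : Type*} [Fintype A] (P : A → ℝ)

theorem sum_pi_prod_eq_one (hP : ∑ a, P a = 1) (n : ℕ) :
    ∑ x : Fin n → A, ∏ i, P (x i) = 1 := by
  rw [← Fintype.prod_sum fun (_ : Fin n) a => P a]
  simp [hP]

theorem sum_pi_prod_le_one (hP₀ : ∀ a, 0 ≤ P a) (hP : ∑ a, P a = 1) {n : ℕ}
    (s : Finset (Fin n → A)) : ∑ x ∈ s, ∏ i, P (x i) ≤ 1 :=
  sum_pi_prod_eq_one P hP n ▸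
    sum_le_sum_of_subset_of_nonneg (subset_univ s) fun _ _ _ => prod_nonneg fun _ _ => hP₀ _

theorem sum_pi_fin_succ_prod_mul {n : ℕ} (F : (Fin (n + 1) → A) → ℝ) :
    ∑ x : Fin (n + 1) → A, (∏ i, P (x i)) * F x
      = ∑ a, P a * ∑ y : Fin n → A, (∏ i, P (y i)) * F (Fin.cons a y) := by
  rw [← (Fin.consEquiv fun _ => A).sum_comp, Fintype.sum_prod_type]
  refine sum_congr rfl fun a _ => ?_
  rw [mul_sum]
  refine sum_congr rfl fun y _ => ?_
  change (∏ i, P ((Fin.cons a y : Fin (n + 1) → A) i)) * F (Fin.cons a y) = _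
  simp only [Fin.prod_univ_succ, Fin.cons_zero, Fin.cons_succ, mul_assoc]

theorem sum_pi_prod_mul_sum (hP : ∑ a, P a = 1) (g : A → ℝ) (n : ℕ) :
    ∑ x : Fin n → A, (∏ i, P (x i)) * ∑ i, g (x i) = n * ∑ a, P a * g a := by
  induction n with
  | zero => simp
  | succ n ih =>
    have step : ∀ a, ∑ y : Fin n → A, (∏ i, P (y i)) * (g a + ∑ i, g (y i))
        = g a + n * ∑ a, P a * g a := by
      intro a
      simp only [mul_add, sum_add_distrib, ← sum_mul, sum_pi_prod_eq_one P hP, ih, one_mul]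
    rw [sum_pi_fin_succ_prod_mul]
    simp only [Fin.sum_univ_succ, Fin.cons_zero, Fin.cons_succ, step]
    simp only [mul_add, sum_add_distrib, ← sum_mul, hP]
    push_cast
    ring

theorem sum_pi_prod_mul_sum_sq (hP : ∑ a, P a = 1) (g : A → ℝ) (hg : ∑ a, P a * g a = 0)
    (n : ℕ) :
    ∑ x : Fin n → A, (∏ i, P (x i)) * (∑ i, g (x i)) ^ 2 = n * ∑ a, P a * g a ^ 2 := by
  induction n with
  | zero => simp
  | succ n ih =>
    have step : ∀ a, ∑ y : Fin n → A, (∏ i, P (y i)) * (g a + ∑ i, g (y i)) ^ 2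
        = g a ^ 2 + n * ∑ a, P a * g a ^ 2 := by
      intro a
      have expand : ∀ y : Fin n → A, (∏ i, P (y i)) * (g a + ∑ i, g (y i)) ^ 2
          = g a ^ 2 * (∏ i, P (y i)) + 2 * g a * ((∏ i, P (y i)) * ∑ i, g (y i))
            + (∏ i, P (y i)) * (∑ i, g (y i)) ^ 2 := fun y => by ring
      simp only [expand, sum_add_distrib, ← mul_sum, sum_pi_prod_eq_one P hP,
        sum_pi_prod_mul_sum P hP, hg, ih]
      ring
    rw [sum_pi_fin_succ_prod_mul]
    simp only [Fin.sum_univ_succ, Fin.cons_zero, Fin.cons_succ, step]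
    simp only [mul_add, sum_add_distrib, ← sum_mul, hP]
    push_cast
    ring

theorem one_sub_sum_filter_abs_sum_le_le_div_sq (hP₀ : ∀ a, 0 ≤ P a) (hP : ∑ a, P a = 1)
    (g : A → ℝ) (hg : ∑ a, P a * g a = 0) (n : ℕ) {t : ℝ} (ht : 0 < t) :
    1 - ∑ x : Fin n → A with |∑ i, g (x i)| ≤ t, ∏ i, P (x i)
      ≤ n * (∑ a, P a * g a ^ 2) / t ^ 2 := by
  rw [← sum_pi_prod_mul_sum_sq P hP g hg, ← sum_pi_prod_eq_one P hP n,
    ← sum_filter_add_sum_filter_not univ fun x : Fin n → A => |∑ i, g (x i)| ≤ t,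
    add_sub_cancel_left]
  simp only [not_le]
  exact sum_filter_lt_abs_le_sum_mul_sq_div _ _ _ (fun x _ => prod_nonneg fun i _ => hP₀ _) ht

end ProductWeights

theorem tendsto_inv_mul_log_of_exp_bounds {b t : ℕ → ℝ} {c D : ℝ} (hc : 0 < c)
    (ht : Tendsto (fun n => t n / n) atTop (𝓝 0))
    (hlo : ∀ᶠ n in atTop, c * Real.exp (-(n * D) - t n) ≤ b n)
    (hhi : ∀ᶠ n in atTop, b n ≤ Real.exp (-(n * D) + t n)) :
    Tendsto (fun n : ℕ => 1 / (n : ℝ) * Real.log (b n)) atTop (𝓝 (-D)) := by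
  have hlim_lo : Tendsto (fun n : ℕ => Real.log c / n - D - t n / n) atTop (𝓝 (-D)) := by
    simpa using ((tendsto_const_div_atTop_nhds_zero_nat (Real.log c)).sub
      tendsto_const_nhds).sub ht
  have hlim_hi : Tendsto (fun n : ℕ => -D + t n / n) atTop (𝓝 (-D)) := by
    simpa using tendsto_const_nhds.add ht
  refine tendsto_of_tendsto_of_tendsto_of_le_of_le' hlim_lo hlim_hi ?_ ?_
  · filter_upwards [hlo, eventually_gt_atTop 0] with n hb hn
    have hn : (0 : ℝ) < n := Nat.cast_pos.mpr hn
    have hlog := Real.log_le_log (by positivity) hb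
    rw [Real.log_mul hc.ne' (Real.exp_ne_zero _), Real.log_exp] at hlog
    calc Real.log c / n - D - t n / n = (Real.log c + (-(n * D) - t n)) / n := by
          field_simp; ring
      _ ≤ 1 / n * Real.log (b n) := by
          rw [one_div_mul_eq_div]
          exact div_le_div_of_nonneg_right hlog hn.le
  · filter_upwards [hhi, hlo, eventually_gt_atTop 0] with n hb hb' hn
    have hn : (0 : ℝ) < n := Nat.cast_pos.mpr hn
    have hlog := Real.log_le_log ((by positivity : 0 < c * _).trans_le hb') hb
    rw [Real.log_exp] at hlog
    calc 1 / n * Real.log (b n) ≤ (-(n * D) + t n) / n := by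
          rw [one_div_mul_eq_div]
          exact div_le_div_of_nonneg_right hlog hn.le
      _ = -D + t n / n := by field_simp

theorem tendsto_natCast_rpow_div_self {r : ℝ} (hr : r < 1) :
    Tendsto (fun n : ℕ => (n : ℝ) ^ r / n) atTop (𝓝 0) := by
  refine ((tendsto_rpow_neg_atTop (sub_pos.mpr hr)).comp tendsto_natCast_atTop_atTop).congr' ?_
  filter_upwards [eventually_gt_atTop 0] with n hn
  rw [Function.comp_apply, neg_sub, Real.rpow_sub_one (Nat.cast_ne_zero.mpr hn.ne')]

theorem tendsto_natCast_div_rpow_sq {r : ℝ} (hr : 1 / 2 < r) :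
    Tendsto (fun n : ℕ => (n : ℝ) / ((n : ℝ) ^ r) ^ 2) atTop (𝓝 0) := by
  refine ((tendsto_rpow_neg_atTop (by linarith : 0 < 2 * r - 1)).comp
    tendsto_natCast_atTop_atTop).congr' ?_
  filter_upwards [eventually_gt_atTop 0] with n hn
  have hn : (0 : ℝ) < n := Nat.cast_pos.mpr hn
  rw [Function.comp_apply, neg_sub, Real.rpow_sub hn, Real.rpow_one, ← Real.rpow_natCast,
    ← Real.rpow_mul hn.le]
  norm_num [mul_comm]

theorem prod_eq_prod_mul_exp_neg_sum_log_div {A : Type*} (P₁ P₂ : A → ℝ)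
    (hP₁ : ∀ a, 0 < P₁ a) (hP₂ : ∀ a, 0 < P₂ a) {n : ℕ} (x : Fin n → A) :
    ∏ i, P₂ (x i) = (∏ i, P₁ (x i)) * Real.exp (-∑ i, Real.log (P₁ (x i) / P₂ (x i))) := by
  rw [← sum_neg_distrib, Real.exp_sum, ← prod_mul_distrib]
  refine prod_congr rfl fun i _ => ?_
  rw [Real.exp_neg, Real.exp_log (div_pos (hP₁ _) (hP₂ _)), inv_div,
    mul_div_cancel₀ _ (hP₁ _).ne']

section Stein

variable {A : Type*} [Fintype A] (P₁ P₂ : A → ℝ)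

noncomputable def relEntropy : ℝ := ∑ a, P₁ a * Real.log (P₁ a / P₂ a)

noncomputable def relEntropyTypicalSet (t : ℝ) (n : ℕ) : Finset (Fin n → A) :=
  {x | |∑ i, (Real.log (P₁ (x i) / P₂ (x i)) - relEntropy P₁ P₂)| ≤ t}

theorem sum_mul_log_div_sub_relEntropy (hP₁ : ∑ a, P₁ a = 1) :
    ∑ a, P₁ a * (Real.log (P₁ a / P₂ a) - relEntropy P₁ P₂) = 0 := by
  simp only [mul_sub, sum_sub_distrib, ← sum_mul, hP₁, one_mul, relEntropy, sub_self]

theorem prod_bounds_of_mem_relEntropyTypicalSet (hP₁ : ∀ a, 0 < P₁ a) (hP₂ : ∀ a, 0 < P₂ a)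
    {t : ℝ} {n : ℕ} {x : Fin n → A} (hx : x ∈ relEntropyTypicalSet P₁ P₂ t n) :
    Real.exp (-(n * relEntropy P₁ P₂) - t) * ∏ i, P₁ (x i) ≤ ∏ i, P₂ (x i) ∧
      ∏ i, P₂ (x i) ≤ Real.exp (-(n * relEntropy P₁ P₂) + t) * ∏ i, P₁ (x i) := by
  simp only [relEntropyTypicalSet, mem_filter_univ, sum_sub_distrib, sum_const, card_univ,
    Fintype.card_fin, nsmul_eq_mul] at hx
  obtain ⟨hlo, hhi⟩ := abs_le.mp hx
  have hP₁x : 0 ≤ ∏ i, P₁ (x i) := prod_nonneg fun i _ => (hP₁ _).le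
  rw [prod_eq_prod_mul_exp_neg_sum_log_div P₁ P₂ hP₁ hP₂, mul_comm (∏ i, P₁ (x i))]
  exact ⟨mul_le_mul_of_nonneg_right (Real.exp_le_exp.mpr (by linarith)) hP₁x,
    mul_le_mul_of_nonneg_right (Real.exp_le_exp.mpr (by linarith)) hP₁x⟩

theorem exp_mul_sum_le_sum_relEntropyTypicalSet (hP₁ : ∀ a, 0 < P₁ a)
    (hP₂ : ∀ a, 0 < P₂ a) (t : ℝ) (n : ℕ) :
    Real.exp (-(n * relEntropy P₁ P₂) - t) * ∑ x ∈ relEntropyTypicalSet P₁ P₂ t n, ∏ i, P₁ (x i)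
      ≤ ∑ x ∈ relEntropyTypicalSet P₁ P₂ t n, ∏ i, P₂ (x i) := by
  rw [mul_sum]
  exact sum_le_sum fun x hx => (prod_bounds_of_mem_relEntropyTypicalSet P₁ P₂ hP₁ hP₂ hx).1

theorem sum_relEntropyTypicalSet_le_exp (hP₁ : ∀ a, 0 < P₁ a) (hP₁1 : ∑ a, P₁ a = 1)
    (hP₂ : ∀ a, 0 < P₂ a) (t : ℝ) (n : ℕ) :
    ∑ x ∈ relEntropyTypicalSet P₁ P₂ t n, ∏ i, P₂ (x i)
      ≤ Real.exp (-(n * relEntropy P₁ P₂) + t) := calc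
  _ ≤ ∑ x ∈ relEntropyTypicalSet P₁ P₂ t n,
        Real.exp (-(n * relEntropy P₁ P₂) + t) * ∏ i, P₁ (x i) :=
      sum_le_sum fun x hx => (prod_bounds_of_mem_relEntropyTypicalSet P₁ P₂ hP₁ hP₂ hx).2
  _ ≤ Real.exp (-(n * relEntropy P₁ P₂) + t) * 1 := by
      rw [← mul_sum]
      exact mul_le_mul_of_nonneg_left
        (sum_pi_prod_le_one P₁ (fun a => (hP₁ a).le) hP₁1 _) (Real.exp_nonneg _)
  _ = _ := mul_one _

variable {P₁ P₂}

theorem tendsto_one_sub_sum_relEntropyTypicalSet (hP₁ : ∀ a, 0 < P₁ a)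
    (hP₁1 : ∑ a, P₁ a = 1) {t : ℕ → ℝ} (ht : ∀ᶠ n in atTop, 0 < t n)
    (hnt : Tendsto (fun n => n / t n ^ 2) atTop (𝓝 0)) :
    Tendsto (fun n => 1 - ∑ x ∈ relEntropyTypicalSet P₁ P₂ (t n) n, ∏ i, P₁ (x i))
      atTop (𝓝 0) := by
  set V := ∑ a, P₁ a * (Real.log (P₁ a / P₂ a) - relEntropy P₁ P₂) ^ 2
  have hbound : Tendsto (fun n => V * (n / t n ^ 2)) atTop (𝓝 0) := by
    simpa using hnt.const_mul V
  refine tendsto_of_tendsto_of_tendsto_of_le_of_le' tendsto_const_nhds hbound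
    (.of_forall fun n => sub_nonneg.mpr
      (sum_pi_prod_le_one P₁ (fun a => (hP₁ a).le) hP₁1 _)) ?_
  filter_upwards [ht] with n htn
  calc _ ≤ n * V / t n ^ 2 :=
        one_sub_sum_filter_abs_sum_le_le_div_sq P₁ (fun a => (hP₁ a).le) hP₁1 _
          (sum_mul_log_div_sub_relEntropy P₁ P₂ hP₁1) n htn
    _ = V * (n / t n ^ 2) := by ring

theorem tendsto_inv_mul_log_sum_relEntropyTypicalSet (hP₁ : ∀ a, 0 < P₁ a)
    (hP₁1 : ∑ a, P₁ a = 1) (hP₂ : ∀ a, 0 < P₂ a) {t : ℕ → ℝ} (ht : ∀ᶠ n in atTop, 0 < t n)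
    (hnt : Tendsto (fun n => n / t n ^ 2) atTop (𝓝 0))
    (htn : Tendsto (fun n => t n / n) atTop (𝓝 0)) :
    Tendsto (fun n : ℕ => 1 / (n : ℝ) *
        Real.log (∑ x ∈ relEntropyTypicalSet P₁ P₂ (t n) n, ∏ i, P₂ (x i)))
      atTop (𝓝 (-relEntropy P₁ P₂)) := by
  have hhalf : ∀ᶠ n in atTop,
      1 / 2 ≤ ∑ x ∈ relEntropyTypicalSet P₁ P₂ (t n) n, ∏ i, P₁ (x i) := by
    filter_upwards [(tendsto_one_sub_sum_relEntropyTypicalSet (P₂ := P₂) hP₁ hP₁1 ht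
      hnt).eventually (gt_mem_nhds one_half_pos)] with n hn
    linarith
  refine tendsto_inv_mul_log_of_exp_bounds one_half_pos htn ?_
    (.of_forall fun n => sum_relEntropyTypicalSet_le_exp P₁ P₂ hP₁ hP₁1 hP₂ (t n) n)
  filter_upwards [hhalf] with n hn
  rw [mul_comm]
  exact (mul_le_mul_of_nonneg_left hn (Real.exp_nonneg _)).trans
    (exp_mul_sum_le_sum_relEntropyTypicalSet P₁ P₂ hP₁ hP₂ (t n) n)

end Stein

theorem stmt_8_general {A : Type*} [Fintype A] (P₁ P₂ : A → ℝ)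
    (hP₁ : ∀ a, 0 < P₁ a) (hP₁1 : ∑ a, P₁ a = 1)
    (hP₂ : ∀ a, 0 < P₂ a) :
    ∃ C : (n : ℕ) → Finset (Fin n → A),
      Filter.Tendsto (fun n : ℕ => 1 - ∑ x ∈ C n, ∏ i, P₁ (x i))
        Filter.atTop (nhds 0) ∧
      Filter.Tendsto (fun n : ℕ => (1 / (n : ℝ)) * Real.log (∑ x ∈ C n, ∏ i, P₂ (x i)))
        Filter.atTop (nhds (-(∑ a, P₁ a * Real.log (P₁ a / P₂ a)))) := by
  have ht : ∀ᶠ n : ℕ in atTop, 0 < (n : ℝ) ^ (3 / 4 : ℝ) := by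
    filter_upwards [eventually_gt_atTop 0] with n hn
    exact Real.rpow_pos_of_pos (Nat.cast_pos.mpr hn) _
  have hnt := tendsto_natCast_div_rpow_sq (r := 3 / 4) (by norm_num)
  exact ⟨fun n => relEntropyTypicalSet P₁ P₂ ((n : ℝ) ^ (3 / 4 : ℝ)) n,
    tendsto_one_sub_sum_relEntropyTypicalSet hP₁ hP₁1 ht hnt,
    tendsto_inv_mul_log_sum_relEntropyTypicalSet hP₁ hP₁1 hP₂ ht hnt
      (tendsto_natCast_rpow_div_self (by norm_num))⟩

/-- Achievability part of Stein's lemma: there are decision regions `C_n` with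
`P₁ⁿ(C_nᶜ) → 0` and `(1/n) log P₂ⁿ(C_n) → -H(P₁‖P₂)`. -/
theorem stmt_8 {A : Type*} [Fintype A] (P₁ P₂ : A → ℝ)
    (hP₁ : ∀ a, 0 < P₁ a) (hP₁1 : ∑ a, P₁ a = 1)
    (hP₂ : ∀ a, 0 < P₂ a) (hP₂1 : ∑ a, P₂ a = 1) :
    ∃ C : (n : ℕ) → Finset (Fin n → A),
      Filter.Tendsto (fun n : ℕ => 1 - ∑ x ∈ C n, ∏ i, P₁ (x i))
        Filter.atTop (nhds 0) ∧
      Filter.Tendsto (fun n : ℕ => (1 / (n : ℝ)) * Real.log (∑ x ∈ C n, ∏ i, P₂ (x i)))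
        Filter.atTop (nhds (-(∑ a, P₁ a * Real.log (P₁ a / P₂ a)))) :=
  stmt_8_general P₁ P₂ hP₁ hP₁1 hP₂
end

section
/- Let A be a finite set, P a probability mass function on A with full support, and ρ_n the normalized Hamming distortion on A^n. For any n ≥ 1 and any nonempty C_n ⊆ A^n, with D = E_{P^n}[ρ_n(X_1^n, C_n)], one has P^n(C_n) ≥ e^{n R_C(D)}, where R_C(D) = inf_{W: W_X=P, E_W[1{X≠Y}]≤D} {H(W‖W_X×W_Y) + E_{W_Y}[log P(Y)]}. -/
/-!
Let `X ~ Pⁿ`, let `Y = φ X` be a codeword of `C` nearest to `X`, and let `Wᵢ` be the joint law of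
`(Xᵢ, Yᵢ)`, with second marginal `Qᵢ`. The average `W` of the `Wᵢ` is feasible for distortion `D`,
and mutual information is convex in the channel for a fixed input law, so
`n · obj W ≤ ∑ᵢ obj Wᵢ = E log (Pⁿ(Y) ∏ᵢ Wᵢ(Xᵢ, Yᵢ) / (P(Xᵢ) Qᵢ(Yᵢ)))`.
By Jensen this is at most `log ∑ₓ Pⁿ(φ x) ∏ᵢ Pr(Xᵢ = xᵢ | Yᵢ = (φ x)ᵢ)`, and grouping the `x` by
`φ x` bounds the sum by `Pⁿ(C)`, because for fixed `y` the product of conditional laws sums to `1`.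
-/

open scoped BigOperators

/-- `W` is a feasible coupling: a pmf on `A × A` with first marginal `P` and
expected distortion at most `D`. -/
def Feasible {A : Type*} [Fintype A] (P : A → ℝ) (ρ : A → A → ℝ) (D : ℝ)
    (W : A × A → ℝ) : Prop :=
  (∀ p, 0 ≤ W p) ∧ (∑ p, W p) = 1 ∧ (∀ x, (∑ y, W (x, y)) = P x) ∧
    (∑ p : A × A, W p * ρ p.1 p.2) ≤ D

/-- The objective `H(W ‖ W_X × W_Y) + E_{W_Y}[log M(Y)]`. -/
noncomputable def obj {A : Type*} [Fintype A] (M : A → ℝ) (W : A × A → ℝ) : ℝ :=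
  (∑ p : A × A, W p * Real.log (W p / ((∑ y, W (p.1, y)) * (∑ x, W (x, p.2)))))
    + ∑ y, (∑ x, W (x, y)) * Real.log (M y)

/-- The rate function `R(D) = inf { H(W‖W_X×W_Y) + E_{W_Y}[log M] : W_X = P, E_W ρ ≤ D }`. -/
noncomputable def massRate {A : Type*} [Fintype A] (P : A → ℝ) (ρ : A → A → ℝ)
    (M : A → ℝ) (D : ℝ) : ℝ :=
  sInf (obj M '' {W | Feasible P ρ D W})

open Finset Real

theorem mul_log_add_sub_mul_le_mul_log_div {a b k : ℝ} (ha : 0 ≤ a) (hb : 0 ≤ b)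
    (hab : b = 0 → a = 0) (hk : 0 < k) :
    a * log k + a - b * k ≤ a * log (a / b) := by
  rcases ha.eq_or_lt with rfl | ha
  · simpa using mul_nonneg hb hk.le
  have hb : 0 < b := hb.lt_of_ne fun h => ha.ne' (hab h.symm)
  have h := one_sub_inv_le_log_of_pos (show 0 < a / (b * k) by positivity)
  rw [log_div ha.ne' (by positivity), log_mul hb.ne' hk.ne', inv_div] at h
  rw [log_div ha.ne' hb.ne']
  have h' := mul_le_mul_of_nonneg_left h ha.le
  rw [mul_sub, mul_one, mul_div_cancel₀ _ ha.ne'] at h'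
  linarith

theorem sum_mul_log_div_sum_le_sum_mul_log_div {ι : Type*} (s : Finset ι) {a b : ι → ℝ}
    (ha : ∀ i ∈ s, 0 ≤ a i) (hb : ∀ i ∈ s, 0 ≤ b i) (hab : ∀ i ∈ s, b i = 0 → a i = 0) :
    (∑ i ∈ s, a i) * log ((∑ i ∈ s, a i) / ∑ i ∈ s, b i) ≤ ∑ i ∈ s, a i * log (a i / b i) := by
  rcases (sum_nonneg ha).eq_or_lt with hA | hA
  · rw [← hA, zero_mul]
    exact sum_nonneg fun i hi => by simp [(sum_eq_zero_iff_of_nonneg ha).1 hA.symm i hi]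
  have hB : 0 < ∑ i ∈ s, b i := by
    refine (sum_nonneg hb).lt_of_ne fun hB => hA.ne' (sum_eq_zero fun i hi => hab i hi ?_)
    exact (sum_eq_zero_iff_of_nonneg hb).1 hB.symm i hi
  have key := sum_le_sum fun i hi => mul_log_add_sub_mul_le_mul_log_div (ha i hi) (hb i hi)
    (hab i hi) (div_pos hA hB)
  rw [sum_sub_distrib, sum_add_distrib, ← sum_mul, ← sum_mul, mul_div_cancel₀ _ hB.ne'] at key
  linarith

theorem sum_mul_log_le_log_sum_mul {ι : Type*} (s : Finset ι) {w g : ι → ℝ}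
    (hw : ∀ i ∈ s, 0 ≤ w i) (hw1 : ∑ i ∈ s, w i = 1) (hg : ∀ i ∈ s, 0 < g i) :
    ∑ i ∈ s, w i * log (g i) ≤ log (∑ i ∈ s, w i * g i) :=
  strictConcaveOn_log_Ioi.concaveOn.le_map_sum hw hw1 hg

theorem sum_smul_apply {ι γ : Type*} [Fintype ι] (w : ι → ℝ) (V : ι → γ → ℝ) (p : γ) :
    (∑ i, w i • V i) p = ∑ i, w i * V i p := by
  simp only [Finset.sum_apply, Pi.smul_apply, smul_eq_mul]

section Couplings

variable {α β : Type*}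

def marginalFst [Fintype β] (W : α × β → ℝ) (a : α) : ℝ := ∑ b, W (a, b)

def marginalSnd [Fintype α] (W : α × β → ℝ) (b : β) : ℝ := ∑ a, W (a, b)

noncomputable def mutualInfo [Fintype α] [Fintype β] (W : α × β → ℝ) : ℝ :=
  ∑ p, W p * log (W p / (marginalFst W p.1 * marginalSnd W p.2))

variable {W : α × β → ℝ}

theorem le_marginalFst [Fintype β] (hW : ∀ p, 0 ≤ W p) (p : α × β) : W p ≤ marginalFst W p.1 :=
  single_le_sum (f := fun b => W (p.1, b)) (fun _ _ => hW _) (mem_univ p.2)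

theorem le_marginalSnd [Fintype α] (hW : ∀ p, 0 ≤ W p) (p : α × β) : W p ≤ marginalSnd W p.2 :=
  single_le_sum (f := fun a => W (a, p.2)) (fun _ _ => hW _) (mem_univ p.1)

theorem marginalFst_sum_smul [Fintype β] {ι : Type*} [Fintype ι] (w : ι → ℝ)
    (V : ι → α × β → ℝ) (a : α) :
    marginalFst (∑ i, w i • V i) a = ∑ i, w i * marginalFst (V i) a := by
  simp only [marginalFst, sum_smul_apply, mul_sum]
  exact sum_comm

theorem marginalSnd_sum_smul [Fintype α] {ι : Type*} [Fintype ι] (w : ι → ℝ)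
    (V : ι → α × β → ℝ) (b : β) :
    marginalSnd (∑ i, w i • V i) b = ∑ i, w i * marginalSnd (V i) b := by
  simp only [marginalSnd, sum_smul_apply, mul_sum]
  exact sum_comm

variable [Fintype α] [Fintype β]

theorem eq_zero_of_marginalFst_mul_marginalSnd_eq_zero (hW : ∀ p, 0 ≤ W p) {p : α × β}
    (h : marginalFst W p.1 * marginalSnd W p.2 = 0) : W p = 0 := by
  rcases mul_eq_zero.1 h with h | h
  · exact le_antisymm (h ▸ le_marginalFst hW p) (hW p)
  · exact le_antisymm (h ▸ le_marginalSnd hW p) (hW p)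

theorem sum_marginalFst (W : α × β → ℝ) : ∑ a, marginalFst W a = ∑ p, W p :=
  (Fintype.sum_prod_type W).symm

theorem sum_marginalSnd (W : α × β → ℝ) : ∑ b, marginalSnd W b = ∑ p, W p := by
  rw [Fintype.sum_prod_type, sum_comm]
  rfl

theorem mutualInfo_nonneg (hW : ∀ p, 0 ≤ W p) (hW1 : ∑ p, W p = 1) : 0 ≤ mutualInfo W := by
  have h := sum_mul_log_div_sum_le_sum_mul_log_div univ (fun p _ => hW p)
    (b := fun p => marginalFst W p.1 * marginalSnd W p.2)
    (fun p _ => mul_nonneg (sum_nonneg fun _ _ => hW _) (sum_nonneg fun _ _ => hW _))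
    (fun p _ => eq_zero_of_marginalFst_mul_marginalSnd_eq_zero hW)
  rwa [Fintype.sum_prod_type (f := fun p => marginalFst W p.1 * marginalSnd W p.2),
    ← sum_mul_sum, sum_marginalFst, sum_marginalSnd, hW1, mul_one, div_one, log_one,
    mul_zero] at h

theorem marginalSnd_le_one (hW : ∀ p, 0 ≤ W p) (hW1 : ∑ p, W p = 1) (b : β) :
    marginalSnd W b ≤ 1 := by
  rw [← hW1, ← sum_marginalSnd]
  exact single_le_sum (fun b _ => sum_nonneg fun a _ => hW (a, b)) (mem_univ b)

theorem mutualInfo_sum_smul_le {ι : Type*} [Fintype ι] {w : ι → ℝ} {V : ι → α × β → ℝ}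
    (hw : ∀ i, 0 ≤ w i) (hw1 : ∑ i, w i = 1) (hV : ∀ i p, 0 ≤ V i p) {P : α → ℝ}
    (hVP : ∀ i, marginalFst (V i) = P) :
    mutualInfo (∑ i, w i • V i) ≤ ∑ i, w i * mutualInfo (V i) := by
  set U := ∑ i, w i • V i
  have hfst : marginalFst U = P := by
    ext a
    simp only [U, marginalFst_sum_smul, hVP, ← sum_mul, hw1, one_mul]
  -- the log-sum inequality at each `p`, with the `i`-th ratio written as `w i V_i p / (w i P Q_i)`
  have hpoint (p : α × β) : U p * log (U p / (P p.1 * marginalSnd U p.2))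
      ≤ ∑ i, w i * (V i p * log (V i p / (marginalFst (V i) p.1 * marginalSnd (V i) p.2))) := by
    have hB : ∑ i, w i * (P p.1 * marginalSnd (V i) p.2) = P p.1 * marginalSnd U p.2 := by
      rw [marginalSnd_sum_smul, mul_sum]
      exact sum_congr rfl fun i _ => mul_left_comm _ _ _
    have hterm (i : ι) : w i * V i p * log (w i * V i p / (w i * (P p.1 * marginalSnd (V i) p.2)))
        = w i * (V i p * log (V i p / (marginalFst (V i) p.1 * marginalSnd (V i) p.2))) := by
      rcases (hw i).eq_or_lt with h | h
      · simp [← h]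
      · rw [mul_div_mul_left _ _ h.ne', hVP, mul_assoc]
    have h := sum_mul_log_div_sum_le_sum_mul_log_div univ
      (a := fun i => w i * V i p) (b := fun i => w i * (P p.1 * marginalSnd (V i) p.2))
      (fun i _ => mul_nonneg (hw i) (hV i p))
      (fun i _ => mul_nonneg (hw i) (hVP i ▸ mul_nonneg (sum_nonneg fun _ _ => hV i _)
        (sum_nonneg fun _ _ => hV i _)))
      (fun i _ h => by
        rcases mul_eq_zero.1 h with h | h
        · rw [h, zero_mul]
        · rw [eq_zero_of_marginalFst_mul_marginalSnd_eq_zero (hV i) (by rwa [hVP]), mul_zero])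
    simpa only [← sum_smul_apply, hB, hterm] using h
  calc mutualInfo U = ∑ p, U p * log (U p / (P p.1 * marginalSnd U p.2)) := by
        rw [mutualInfo, hfst]
    _ ≤ ∑ p, ∑ i, w i * (V i p * log (V i p / (marginalFst (V i) p.1 * marginalSnd (V i) p.2))) :=
        sum_le_sum fun p _ => hpoint p
    _ = ∑ i, w i * mutualInfo (V i) := by
        rw [sum_comm]
        simp only [mutualInfo, mul_sum]

end Couplings

section Rate

variable {A : Type*} [Fintype A]

theorem obj_eq_mutualInfo_add (M : A → ℝ) (W : A × A → ℝ) :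
    obj M W = mutualInfo W + ∑ b, marginalSnd W b * log (M b) :=
  rfl

theorem neg_sum_abs_log_le_obj (M : A → ℝ) {W : A × A → ℝ} (hW : ∀ p, 0 ≤ W p)
    (hW1 : ∑ p, W p = 1) : -∑ b, |log (M b)| ≤ obj M W := by
  have hlog (b : A) : -|log (M b)| ≤ marginalSnd W b * log (M b) := by
    have h0 : 0 ≤ marginalSnd W b := sum_nonneg fun a _ => hW (a, b)
    have h1 := marginalSnd_le_one hW hW1 b
    nlinarith [neg_abs_le (log (M b)), abs_nonneg (log (M b))]
  rw [obj_eq_mutualInfo_add, ← sum_neg_distrib]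
  linarith [mutualInfo_nonneg hW hW1, sum_le_sum fun b (_ : b ∈ univ) => hlog b]

theorem obj_eq_sum_mul_log_add (M : A → ℝ) (W : A × A → ℝ) :
    obj M W = ∑ p, W p * (log (W p / (marginalFst W p.1 * marginalSnd W p.2)) + log (M p.2)) := by
  simp only [obj_eq_mutualInfo_add, mutualInfo, mul_add, sum_add_distrib, marginalSnd, sum_mul]
  rw [Fintype.sum_prod_type (f := fun p => W p * log (M p.2)), sum_comm]

theorem massRate_le_obj {P : A → ℝ} {ρ : A → A → ℝ} (M : A → ℝ) {D : ℝ} {W : A × A → ℝ}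
    (hW : Feasible P ρ D W) : massRate P ρ M D ≤ obj M W :=
  csInf_le ⟨-∑ b, |log (M b)|, by
    rintro _ ⟨V, hV, rfl⟩
    exact neg_sum_abs_log_le_obj M hV.1 hV.2.1⟩ ⟨W, hW, rfl⟩

theorem obj_sum_smul_le {ι : Type*} [Fintype ι] (M : A → ℝ) {w : ι → ℝ} (hw : ∀ i, 0 ≤ w i)
    (hw1 : ∑ i, w i = 1) {V : ι → A × A → ℝ} (hV : ∀ i p, 0 ≤ V i p) {P : A → ℝ}
    (hVP : ∀ i, marginalFst (V i) = P) :
    obj M (∑ i, w i • V i) ≤ ∑ i, w i * obj M (V i) := by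
  simp only [obj_eq_mutualInfo_add, mul_add, sum_add_distrib, marginalSnd_sum_smul, sum_mul,
    mul_sum]
  refine add_le_add (mutualInfo_sum_smul_le hw hw1 hV hVP) (le_of_eq ?_)
  rw [sum_comm]
  simp only [mul_assoc]

end Rate

section Pushforward

variable {X Y : Type*} [Fintype X] [DecidableEq Y]

def pushforward (μ : X → ℝ) (f : X → Y) (y : Y) : ℝ := ∑ x with f x = y, μ x

variable {μ : X → ℝ}

theorem pushforward_nonneg (hμ : ∀ x, 0 ≤ μ x) (f : X → Y) (y : Y) : 0 ≤ pushforward μ f y :=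
  sum_nonneg fun x _ => hμ x

theorem le_pushforward_apply (hμ : ∀ x, 0 ≤ μ x) (f : X → Y) (x : X) :
    μ x ≤ pushforward μ f (f x) :=
  single_le_sum (f := μ) (fun x _ => hμ x) (by simp)

theorem sum_pushforward_mul [Fintype Y] (μ : X → ℝ) (f : X → Y) (F : Y → ℝ) :
    ∑ y, pushforward μ f y * F y = ∑ x, μ x * F (f x) := by
  rw [← sum_fiberwise univ f]
  refine sum_congr rfl fun y _ => ?_
  rw [pushforward, sum_mul]
  exact sum_congr rfl fun x hx => by rw [(mem_filter.1 hx).2]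

theorem sum_pushforward [Fintype Y] (μ : X → ℝ) (f : X → Y) :
    ∑ y, pushforward μ f y = ∑ x, μ x := by
  simpa using sum_pushforward_mul μ f 1

theorem sum_comp_le_sum_sum_of_mapsTo {C : Finset Y} {φ : X → Y} (hφ : ∀ x, φ x ∈ C)
    {h : Y → X → ℝ} (hh : ∀ y x, 0 ≤ h y x) : ∑ x, h (φ x) x ≤ ∑ y ∈ C, ∑ x, h y x := by
  rw [← sum_fiberwise_of_maps_to fun x _ => hφ x]
  refine sum_le_sum fun y _ => ?_
  rw [sum_congr rfl fun x hx => by rw [(mem_filter.1 hx).2]]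
  exact sum_le_sum_of_subset_of_nonneg (filter_subset _ _) fun x _ _ => hh y x

variable {α β : Type*} [DecidableEq α] [DecidableEq β]

theorem marginalFst_pushforward [Fintype β] (μ : X → ℝ) (u : X → α) (v : X → β) :
    marginalFst (pushforward μ fun x => (u x, v x)) = pushforward μ u := by
  ext a
  simp only [marginalFst, pushforward, Prod.mk.injEq]
  rw [← sum_fiberwise_of_maps_to (s := {x | u x = a}) (t := univ) (g := v) (fun _ _ => mem_univ _)]
  simp only [filter_filter]

theorem marginalSnd_pushforward [Fintype α] (μ : X → ℝ) (u : X → α) (v : X → β) :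
    marginalSnd (pushforward μ fun x => (u x, v x)) = pushforward μ v := by
  ext b
  simp only [marginalSnd, pushforward, Prod.mk.injEq]
  rw [← sum_fiberwise_of_maps_to (s := {x | v x = b}) (t := univ) (g := u) (fun _ _ => mem_univ _)]
  simp only [filter_filter, and_comm]

end Pushforward

section PiMass

variable {ι A : Type*} [Fintype ι] {P : A → ℝ}

def piMass (P : A → ℝ) (x : ι → A) : ℝ := ∏ i, P (x i)

theorem piMass_pos (hP : ∀ a, 0 < P a) (x : ι → A) : 0 < piMass P x :=
  prod_pos fun i _ => hP (x i)

theorem sum_piMass [Fintype A] [DecidableEq ι] (hP1 : ∑ a, P a = 1) :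
    ∑ x : ι → A, piMass P x = 1 := by
  simp only [piMass, ← Fintype.prod_sum fun (_ : ι) a => P a, hP1, prod_const_one]

theorem pushforward_piMass_eval [Fintype A] [DecidableEq ι] [DecidableEq A]
    (hP1 : ∑ a, P a = 1) (i : ι) :
    pushforward (piMass P) (fun x => x i) = P := by
  ext a
  let g (j : ι) (b : A) : ℝ := if j = i then (if b = a then P b else 0) else P b
  have hg (x : ι → A) : ∏ j, g j (x j) = if x i = a then piMass P x else 0 := by
    split_ifs with h
    · exact prod_congr rfl fun j _ => by by_cases hj : j = i <;> simp [g, hj, h]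
    · exact prod_eq_zero (mem_univ i) (by simp [g, h])
  have hsum (j : ι) : ∑ b, g j b = if j = i then P a else 1 := by
    by_cases hj : j = i <;> simp [g, hj, hP1]
  calc pushforward (piMass P) (fun x => x i) a = ∑ x : ι → A, ∏ j, g j (x j) := by
        simp only [hg, pushforward, sum_filter]
    _ = P a := by
        rw [← Fintype.prod_sum, prod_congr rfl fun j _ => hsum j, prod_ite_eq']
        simp

end PiMass

section ConditionalProduct

variable {ι α β : Type*} [Fintype ι] [Fintype α] [DecidableEq ι] {V : ι → α × β → ℝ}
  {P : β → ℝ}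

-- Only `≤`: a factor with `marginalSnd (V i) (y i) = 0` sums to `0 / 0 = 0` instead of `1`.
theorem sum_prod_div_marginalSnd_mul_le (hV : ∀ i p, 0 ≤ V i p) (hP : ∀ b, 0 ≤ P b) (y : ι → β) :
    ∑ x : ι → α, ∏ i, V i (x i, y i) / marginalSnd (V i) (y i) * P (y i) ≤ piMass P y := by
  rw [← Fintype.prod_sum fun i a => V i (a, y i) / marginalSnd (V i) (y i) * P (y i)]
  refine prod_le_prod (fun i _ => sum_nonneg fun a _ => ?_) fun i _ => ?_
  · exact mul_nonneg (div_nonneg (hV i _) (sum_nonneg fun _ _ => hV i _)) (hP _)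
  · rw [← sum_mul, ← sum_div]
    exact mul_le_of_le_one_left (hP _) (div_self_le_one _)

theorem sum_prod_comp_div_marginalSnd_mul_le [DecidableEq β] (hV : ∀ i p, 0 ≤ V i p)
    (hP : ∀ b, 0 ≤ P b) {C : Finset (ι → β)} {φ : (ι → α) → ι → β} (hφ : ∀ x, φ x ∈ C) :
    ∑ x : ι → α, ∏ i, V i (x i, φ x i) / marginalSnd (V i) (φ x i) * P (φ x i)
      ≤ ∑ y ∈ C, piMass P y := by
  refine (sum_comp_le_sum_sum_of_mapsTo hφ fun y x => prod_nonneg fun i _ => ?_).trans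
    (sum_le_sum fun y _ => sum_prod_div_marginalSnd_mul_le hV hP y)
  exact mul_nonneg (div_nonneg (hV i _) (sum_nonneg fun _ _ => hV i _)) (hP _)

end ConditionalProduct

section CoordinateCouplings

variable {ι A : Type*} [Fintype ι] [Fintype A] [DecidableEq ι] [DecidableEq A] {P : A → ℝ}

theorem sum_obj_pushforward_le_log_sum (hP : ∀ a, 0 < P a) (hP1 : ∑ a, P a = 1)
    {C : Finset (ι → A)} {φ : (ι → A) → ι → A} (hφ : ∀ x, φ x ∈ C) :
    ∑ i, obj P (pushforward (piMass P) fun x => (x i, φ x i)) ≤ log (∑ y ∈ C, piMass P y) := by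
  set μ : (ι → A) → ℝ := piMass P
  set W := fun i => pushforward μ fun x => (x i, φ x i)
  set Q := fun i => pushforward μ fun x => φ x i
  have hμ : ∀ x, 0 < μ x := piMass_pos hP
  have hW (i : ι) (x : ι → A) : 0 < W i (x i, φ x i) :=
    (hμ x).trans_le (le_pushforward_apply (fun x => (hμ x).le) _ x)
  have hQ (i : ι) (x : ι → A) : 0 < Q i (φ x i) :=
    (hμ x).trans_le (le_pushforward_apply (fun x => (hμ x).le) (fun x => φ x i) x)
  have hfactor (i : ι) (x : ι → A) : 0 < W i (x i, φ x i) / (P (x i) * Q i (φ x i)) :=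
    div_pos (hW i x) (mul_pos (hP _) (hQ i x))
  set g : (ι → A) → ℝ := fun x => ∏ i, W i (x i, φ x i) / (P (x i) * Q i (φ x i)) * P (φ x i)
  have hobj : ∑ i, obj P (W i) = ∑ x, μ x * log (g x) := by
    have hX (i : ι) : pushforward μ (fun x => x i) = P := pushforward_piMass_eval hP1 i
    simp only [W, obj_eq_sum_mul_log_add, marginalFst_pushforward, marginalSnd_pushforward, hX,
      sum_pushforward_mul]
    rw [sum_comm]
    refine sum_congr rfl fun x _ => ?_
    rw [← mul_sum, log_prod fun i _ => ?_]
    · refine congrArg _ (sum_congr rfl fun i _ => ?_)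
      rw [log_mul (hfactor i x).ne' (hP _).ne']
    · exact (mul_pos (hfactor i x) (hP _)).ne'
  have hμg (x : ι → A) : μ x * g x = ∏ i, W i (x i, φ x i) / Q i (φ x i) * P (φ x i) := by
    simp only [μ, g, piMass, ← prod_mul_distrib]
    refine prod_congr rfl fun i _ => ?_
    have := (hP (x i)).ne'
    field_simp
  calc ∑ i, obj P (W i) = ∑ x, μ x * log (g x) := hobj
    _ ≤ log (∑ x, μ x * g x) := sum_mul_log_le_log_sum_mul univ (fun x _ => (hμ x).le)
        (sum_piMass hP1) fun x _ => prod_pos fun i _ => mul_pos (hfactor i x) (hP _)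
    _ ≤ log (∑ y ∈ C, μ y) := by
        have hne : (univ : Finset (ι → A)).Nonempty :=
          nonempty_of_sum_ne_zero (f := μ) (by rw [sum_piMass hP1]; exact one_ne_zero)
        refine log_le_log (sum_pos (fun x _ => mul_pos (hμ x) (prod_pos fun i _ =>
          mul_pos (hfactor i x) (hP _))) hne) ?_
        have hQW (i : ι) : Q i = marginalSnd (W i) := (marginalSnd_pushforward μ _ _).symm
        simpa only [hμg, hQW] using sum_prod_comp_div_marginalSnd_mul_le
          (fun i => pushforward_nonneg (fun x => (hμ x).le) _) (fun a => (hP a).le) hφ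

theorem feasible_sum_smul_pushforward (hP : ∀ a, 0 ≤ P a) (hP1 : ∑ a, P a = 1)
    (ρ : A → A → ℝ) (φ : (ι → A) → ι → A) {w : ι → ℝ} (hw : ∀ i, 0 ≤ w i) (hw1 : ∑ i, w i = 1) :
    Feasible P ρ (∑ x, piMass P x * ∑ i, w i * ρ (x i) (φ x i))
      (∑ i, w i • pushforward (piMass P) fun x => (x i, φ x i)) := by
  have hμ (x : ι → A) : 0 ≤ piMass P x := prod_nonneg fun j _ => hP (x j)
  refine ⟨fun p => ?_, ?_, fun a => ?_, le_of_eq ?_⟩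
  · rw [sum_smul_apply]
    exact sum_nonneg fun i _ => mul_nonneg (hw i) (pushforward_nonneg hμ _ _)
  · simp only [sum_smul_apply]
    rw [sum_comm]
    simp only [← mul_sum, sum_pushforward, sum_piMass hP1, mul_one, hw1]
  · change marginalFst _ a = P a
    simp only [marginalFst_sum_smul, marginalFst_pushforward, pushforward_piMass_eval hP1,
      ← sum_mul, hw1, one_mul]
  · calc ∑ p : A × A, (∑ i, w i • pushforward (piMass P) fun x => (x i, φ x i)) p * ρ p.1 p.2
        = ∑ i, w i * ∑ p : A × A, pushforward (piMass P) (fun x => (x i, φ x i)) p * ρ p.1 p.2 := by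
          simp only [sum_smul_apply, sum_mul, mul_sum, mul_assoc]
          exact sum_comm
      _ = ∑ x, piMass P x * ∑ i, w i * ρ (x i) (φ x i) := by
          simp only [sum_pushforward_mul _ _ fun p : A × A => ρ p.1 p.2, mul_sum]
          rw [sum_comm]
          exact sum_congr rfl fun x _ => sum_congr rfl fun i _ => mul_left_comm _ _ _

end CoordinateCouplings

/-- Corollary 3(i): for normalized Hamming distortion, with
`D = E_{Pⁿ}[ρ_n(X₁ⁿ, C_n)]`, one has `Pⁿ(C_n) ≥ exp (n R_C(D))`. -/
theorem stmt_11 {A : Type*} [Fintype A] [DecidableEq A] (P : A → ℝ)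
    (hP : ∀ a, 0 < P a) (hP1 : ∑ a, P a = 1)
    (n : ℕ) (hn : 1 ≤ n) (C : Finset (Fin n → A)) (hC : C.Nonempty) :
    Real.exp ((n : ℝ) * massRate P (fun a b => if a = b then 0 else 1) P
        (∑ x : Fin n → A, (∏ i, P (x i)) *
          C.inf' hC (fun y => (1 / (n : ℝ)) * ∑ i, if x i = y i then (0:ℝ) else 1)))
      ≤ ∑ x ∈ C, ∏ i, P (x i) := by
  choose φ hφC hφ using fun x : Fin n → A =>
    exists_mem_eq_inf' hC fun y => (1 / (n : ℝ)) * ∑ i, if x i = y i then (0:ℝ) else 1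
  have hn0 : (n : ℝ) ≠ 0 := Nat.cast_ne_zero.2 (by omega)
  set w : Fin n → ℝ := fun _ => 1 / n
  have hw1 : ∑ i, w i = 1 := by simp [w, hn0]
  set W := fun i => pushforward (piMass P) fun x => (x i, φ x i)
  have hWP (i : Fin n) : marginalFst (W i) = P := by
    rw [marginalFst_pushforward, pushforward_piMass_eval hP1]
  have hfeas := feasible_sum_smul_pushforward (fun a => (hP a).le) hP1
    (fun a b => if a = b then 0 else 1) φ (fun _ => by positivity) hw1
  have hD : (∑ x : Fin n → A, (∏ i, P (x i)) *
      C.inf' hC (fun y => (1 / (n : ℝ)) * ∑ i, if x i = y i then (0:ℝ) else 1))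
      = ∑ x, piMass P x * ∑ i, w i * if x i = φ x i then 0 else 1 := by
    refine sum_congr rfl fun x _ => ?_
    rw [hφ, mul_sum]
    rfl
  rw [hD]
  calc exp (n * massRate P (fun a b => if a = b then 0 else 1) P _)
      ≤ exp (n * obj P (∑ i, w i • W i)) :=
        exp_le_exp.2 (mul_le_mul_of_nonneg_left (massRate_le_obj P hfeas) n.cast_nonneg)
    _ ≤ exp (∑ i, obj P (W i)) := by
        have hconv := obj_sum_smul_le P (fun _ => by positivity) hw1
          (fun i => pushforward_nonneg (fun x => (piMass_pos hP x).le) _) hWP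
        refine exp_le_exp.2 ((mul_le_mul_of_nonneg_left hconv n.cast_nonneg).trans_eq ?_)
        rw [← mul_sum, one_div, mul_inv_cancel_left₀ hn0]
    _ ≤ exp (log (∑ y ∈ C, piMass P y)) := exp_le_exp.2 (sum_obj_pushforward_le_log_sum hP hP1 hφC)
    _ = ∑ y ∈ C, piMass P y := exp_log (sum_pos (fun y _ => piMass_pos hP y) hC)
end
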